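/- In a marked B-polygon \alpha \subset Z^2 that is not a B_1-marked polygon (not a height-1 pyramid over a marked side), there exists a marked side L of the convex hull of \alpha such that every point of \alpha is at lattice distance at most 1 from the line containing L. -/

import Mathlib

/-- The value of the integral affine function with linear part `u` at `p`. -/
def lval (u p : ℤ × ℤ) : ℤ := u.1 * p.1 + u.2 * p.2

/-- `u` is primitive and the line `{lval u · = c}` supports `α` from below. -/
def IsSupp (α : Finset (ℤ × ℤ)) (u : ℤ × ℤ) (c : ℤ) : Prop :=
  IsCoprime u.1 u.2 ∧ ∀ p ∈ α, c ≤ lval u p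

/-- `s` is a side (edge) of the convex hull of `α`: the set of points of `α` lying on a
supporting line, with at least two points. -/
def IsSide (α : Finset (ℤ × ℤ)) (s : Finset (ℤ × ℤ)) : Prop :=
  ∃ u c, IsSupp α u c ∧ s = α.filter (fun p => lval u p = c) ∧ 2 ≤ s.card

/-- Three non-collinear points of `ℤ²`. -/
def NotCollinear (p q r : ℤ × ℤ) : Prop :=
  (q.1 - p.1) * (r.2 - p.2) ≠ (q.2 - p.2) * (r.1 - p.1)

/-- A finite subset of `ℤ²` is 2-dimensional: it contains three non-collinear points. -/
def TwoDim (S : Finset (ℤ × ℤ)) : Prop :=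
  ∃ p ∈ S, ∃ q ∈ S, ∃ r ∈ S, NotCollinear p q r

/-- The triangle `p q r` is a marked B-triangle for `(α, M)`: there is a marked side
`s ∈ M` (with supporting data `(u, c)`) such that the triangle is a pyramid of lattice
height 1 whose base segment lies on the line of `s`. -/
def IsMarkedBTriangle (α : Finset (ℤ × ℤ)) (M : Finset (Finset (ℤ × ℤ)))
    (p q r : ℤ × ℤ) : Prop :=
  ∃ s ∈ M, ∃ u c, IsSupp α u c ∧ s = α.filter (fun x => lval u x = c) ∧
    ((lval u p = c ∧ lval u q = c ∧ lval u r = c + 1) ∨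
     (lval u p = c ∧ lval u r = c ∧ lval u q = c + 1) ∨
     (lval u q = c ∧ lval u r = c ∧ lval u p = c + 1))

/-- A marked B-polygon: a finite 2-dimensional subset `α ⊆ ℤ²` with a set `M` of marked
sides of its convex hull, such that every 2-dimensional triangle with vertices in `α` is a
marked B-triangle. -/
def IsMarkedBPolygon (α : Finset (ℤ × ℤ)) (M : Finset (Finset (ℤ × ℤ))) : Prop :=
  TwoDim α ∧ (∀ s ∈ M, IsSide α s) ∧
    ∀ p ∈ α, ∀ q ∈ α, ∀ r ∈ α, NotCollinear p q r → IsMarkedBTriangle α M p q r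

/-- B₁-marked polygon: a pyramid of lattice height 1 with base on a marked side. -/
def B1Shape (α : Finset (ℤ × ℤ)) (M : Finset (Finset (ℤ × ℤ))) : Prop :=
  ∃ s ∈ M, ∃ u c, IsSupp α u c ∧ s = α.filter (fun x => lval u x = c) ∧
    ∃ apex ∈ α, lval u apex = c + 1 ∧ ∀ p ∈ α, p ∉ s → p = apex

/-- B₂-marked polygon: `α` is contained in a lattice strip of width 1 and both sides of the
convex hull on the boundary of the strip are marked. -/
def B2Shape (α : Finset (ℤ × ℤ)) (M : Finset (Finset (ℤ × ℤ))) : Prop :=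
  ∃ u c, IsSupp α u c ∧ IsSupp α (-u) (-(c + 1)) ∧
    α.filter (fun x => lval u x = c) ∈ M ∧
    α.filter (fun x => lval u x = c + 1) ∈ M ∧
    ∀ p ∈ α, lval u p = c ∨ lval u p = c + 1

/-- Flat border marked polygon: `α = {(0,0), (a,0), (0,1), (1,1)}` with `a > 1` and all
sides of the convex hull except `[(0,1),(1,1)]` are marked. -/
def FlatShape (α : Finset (ℤ × ℤ)) (M : Finset (Finset (ℤ × ℤ))) : Prop :=
  ∃ a : ℤ, 1 < a ∧ α = {(0, 0), (a, 0), (0, 1), (1, 1)} ∧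
    M = ({{(0, 0), (a, 0)}, {(0, 0), (0, 1)}, {(a, 0), (1, 1)}} : Finset (Finset (ℤ × ℤ)))


/-!
Suppose every marked side has a point of `α` at lattice height at least `2` over its line. Some
marked side contains two points `p ≠ q` of `α`, since it carries the base of a B-triangle. A
point `z` at height `≥ 2` over the line `pq` spans with `p, q` a B-triangle whose base cannot be
`[p, q]` (two primitive functionals vanishing on `q - p` agree up to sign), so say its base is
`[p, z]` with apex `q` at height `1`. Running the same argument on the marked side through
`[p, z]` shows that `z - p` is primitive. Now `q - p` is primitive as well (it has height `1`
over the line `pz`), and `(z - p, q - p)` is a basis of `ℤ²`, so `z` has height `±1` over `pq`: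
a contradiction.
-/

/-- The vector `v` rotated by a quarter turn, so that `lval (perp v) w = det (v, w)`. -/
def perp (v : ℤ × ℤ) : ℤ × ℤ := (-v.2, v.1)

def IsMarkedSupp (α : Finset (ℤ × ℤ)) (M : Finset (Finset (ℤ × ℤ))) (u : ℤ × ℤ) (c : ℤ) :
    Prop :=
  IsSupp α u c ∧ α.filter (fun x => lval u x = c) ∈ M

section LinearAlgebra

lemma lval_sub (u p q : ℤ × ℤ) : lval u (p - q) = lval u p - lval u q := by
  simp only [lval, Prod.fst_sub, Prod.snd_sub]; ring

lemma lval_neg_left (u p : ℤ × ℤ) : lval (-u) p = -lval u p := by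
  simp only [lval, Prod.fst_neg, Prod.snd_neg]; ring

lemma lval_perp_self (v : ℤ × ℤ) : lval (perp v) v = 0 := by
  simp only [lval, perp]; ring

lemma lval_perp_comm (v w : ℤ × ℤ) : lval (perp v) w = -lval (perp w) v := by
  simp only [lval, perp]; ring

lemma IsCoprime.perp {v : ℤ × ℤ} (hv : IsCoprime v.1 v.2) : IsCoprime (perp v).1 (perp v).2 :=
  hv.symm.neg_left

lemma isCoprime_of_lval_eq_one {u v : ℤ × ℤ} (h : lval u v = 1) : IsCoprime v.1 v.2 :=
  ⟨u.1, u.2, h⟩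

lemma ne_zero_of_isCoprime {v : ℤ × ℤ} (hv : IsCoprime v.1 v.2) : v ≠ 0 := by
  rintro rfl
  exact not_isCoprime_zero_zero hv

lemma eq_or_eq_neg_of_lval_eq_zero {u u' v : ℤ × ℤ} (hu : IsCoprime u.1 u.2)
    (hu' : IsCoprime u'.1 u'.2) (hv : v ≠ 0) (h : lval u v = 0) (h' : lval u' v = 0) :
    u' = u ∨ u' = -u := by
  obtain ⟨a, b, hab⟩ := hu
  obtain ⟨a', b', hab'⟩ := hu'
  simp only [lval] at h h'
  have hcross : u.1 * u'.2 - u.2 * u'.1 = 0 := by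
    by_contra hne
    exact hv (Prod.ext
      ((mul_eq_zero.1 (by linear_combination u'.2 * h - u.2 * h')).resolve_left hne)
      ((mul_eq_zero.1 (by linear_combination u.1 * h' - u'.1 * h)).resolve_left hne))
  set t := a * u'.1 + b * u'.2
  have h1 : u'.1 = t * u.1 := by linear_combination (-u'.1) * hab - b * hcross
  have h2 : u'.2 = t * u.2 := by linear_combination (-u'.2) * hab + a * hcross
  have ht : t * (a' * u.1 + b' * u.2) = 1 := by
    linear_combination hab' - a' * h1 - b' * h2
  rcases Int.isUnit_iff.1 (IsUnit.of_mul_eq_one _ ht) with ht | ht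
  · exact .inl (Prod.ext (by rw [h1, ht, one_mul]) (by rw [h2, ht, one_mul]))
  · exact .inr (Prod.ext (by rw [h1, ht]; simp) (by rw [h2, ht]; simp))

lemma lval_eq_or_eq_neg_of_lval_eq_zero {u u' v : ℤ × ℤ} (hu : IsCoprime u.1 u.2)
    (hu' : IsCoprime u'.1 u'.2) (hv : v ≠ 0) (h : lval u v = 0) (h' : lval u' v = 0)
    (x : ℤ × ℤ) : lval u' x = lval u x ∨ lval u' x = -lval u x := by
  rcases eq_or_eq_neg_of_lval_eq_zero hu hu' hv h h' with rfl | rfl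
  · exact .inl rfl
  · exact .inr (lval_neg_left u x)

lemma lval_eq_one_or_neg_one_of_basis {u u' v w : ℤ × ℤ} (hu : IsCoprime u.1 u.2)
    (hu' : IsCoprime u'.1 u'.2) (hv : IsCoprime v.1 v.2) (hw : lval u w = 0)
    (hw' : lval u' w = 1) (hv' : lval u' v = 0) : lval u v = 1 ∨ lval u v = -1 := by
  have hw_prim := isCoprime_of_lval_eq_one hw'
  have hu_w := lval_eq_or_eq_neg_of_lval_eq_zero hw_prim.perp hu
    (ne_zero_of_isCoprime hw_prim) (lval_perp_self w) hw v
  have hu'_v := lval_eq_or_eq_neg_of_lval_eq_zero hv.perp hu'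
    (ne_zero_of_isCoprime hv) (lval_perp_self v) hv' w
  -- `u = ± perp w` and `u' = ± perp v`, so `lval u v` and `lval u' w` are both `± det (v, w)`
  have hdet := lval_perp_comm v w
  omega

end LinearAlgebra

lemma notCollinear_of_lval_eq {u p q r : ℤ × ℤ} {c : ℤ} (hpq : p ≠ q) (hp : lval u p = c)
    (hq : lval u q = c) (hr : lval u r ≠ c) : NotCollinear p q r := by
  intro hcol
  simp only [lval] at hp hq hr
  apply hr
  obtain h | h : q.1 - p.1 ≠ 0 ∨ q.2 - p.2 ≠ 0 := by
    by_contra! h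
    exact hpq (Prod.ext (by omega) (by omega))
  · exact mul_right_cancel₀ h
      (by linear_combination (r.1 - p.1) * (hq - hp) + u.2 * hcol + (q.1 - p.1) * hp)
  · exact mul_right_cancel₀ h
      (by linear_combination (r.2 - p.2) * (hq - hp) - u.1 * hcol + (q.2 - p.2) * hp)

lemma NotCollinear.ne₁₂ {p q r : ℤ × ℤ} (h : NotCollinear p q r) : p ≠ q :=
  fun he => h (by subst he; ring)

lemma NotCollinear.ne₁₃ {p q r : ℤ × ℤ} (h : NotCollinear p q r) : p ≠ r :=
  fun he => h (by subst he; ring)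

lemma NotCollinear.ne₂₃ {p q r : ℤ × ℤ} (h : NotCollinear p q r) : q ≠ r :=
  fun he => h (by subst he; ring)

lemma IsMarkedBPolygon.exists_marked_edge {α : Finset (ℤ × ℤ)} {M : Finset (Finset (ℤ × ℤ))}
    (h : IsMarkedBPolygon α M) :
    ∃ p ∈ α, ∃ q ∈ α, p ≠ q ∧ ∃ u c, IsMarkedSupp α M u c ∧ lval u p = c ∧ lval u q = c := by
  obtain ⟨⟨p, hp, q, hq, r, hr, hpqr⟩, -, htri⟩ := h
  obtain ⟨s, hs, u, c, hsupp, rfl, hbase⟩ := htri p hp q hq r hr hpqr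
  rcases hbase with ⟨h₁, h₂, -⟩ | ⟨h₁, h₂, -⟩ | ⟨h₁, h₂, -⟩
  · exact ⟨p, hp, q, hq, hpqr.ne₁₂, u, c, ⟨hsupp, hs⟩, h₁, h₂⟩
  · exact ⟨p, hp, r, hr, hpqr.ne₁₃, u, c, ⟨hsupp, hs⟩, h₁, h₂⟩
  · exact ⟨q, hq, r, hr, hpqr.ne₂₃, u, c, ⟨hsupp, hs⟩, h₁, h₂⟩

section TallSides

variable {α : Finset (ℤ × ℤ)} {M : Finset (Finset (ℤ × ℤ))} {p q : ℤ × ℤ} {u : ℤ × ℤ} {c : ℤ}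

lemma exists_apex_of_marked_edge
    (htri : ∀ p ∈ α, ∀ q ∈ α, ∀ r ∈ α, NotCollinear p q r → IsMarkedBTriangle α M p q r)
    (htall : ∀ u c, IsMarkedSupp α M u c → ∃ z ∈ α, c + 1 < lval u z)
    (hp : p ∈ α) (hq : q ∈ α) (hpq : p ≠ q) (hmarked : IsMarkedSupp α M u c)
    (hpc : lval u p = c) (hqc : lval u q = c) :
    ∃ z ∈ α, c + 1 < lval u z ∧ ∃ u' c', IsMarkedSupp α M u' c' ∧ lval u' z = c' ∧
      (lval u' p = c' ∧ lval u' q = c' + 1 ∨ lval u' q = c' ∧ lval u' p = c' + 1) := by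
  obtain ⟨z, hz, hzc⟩ := htall u c hmarked
  obtain ⟨s, hs, u', c', hsupp', rfl, hbase⟩ :=
    htri p hp q hq z hz (notCollinear_of_lval_eq hpq hpc hqc (by omega))
  rcases hbase with ⟨hp', hq', hz'⟩ | ⟨hp', hz', hq'⟩ | ⟨hq', hz', hp'⟩
  · have hpq0 : lval u (q - p) = 0 := by rw [lval_sub]; omega
    have hpq0' : lval u' (q - p) = 0 := by rw [lval_sub]; omega
    have := lval_eq_or_eq_neg_of_lval_eq_zero hmarked.1.1 hsupp'.1
      (sub_ne_zero.2 hpq.symm) hpq0 hpq0' (z - p)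
    simp only [lval_sub] at this
    omega
  · exact ⟨z, hz, hzc, u', c', ⟨hsupp', hs⟩, hz', .inl ⟨hp', hq'⟩⟩
  · exact ⟨z, hz, hzc, u', c', ⟨hsupp', hs⟩, hz', .inr ⟨hq', hp'⟩⟩

lemma isCoprime_sub_of_marked_edge
    (htri : ∀ p ∈ α, ∀ q ∈ α, ∀ r ∈ α, NotCollinear p q r → IsMarkedBTriangle α M p q r)
    (htall : ∀ u c, IsMarkedSupp α M u c → ∃ z ∈ α, c + 1 < lval u z)
    (hp : p ∈ α) (hq : q ∈ α) (hpq : p ≠ q) (hmarked : IsMarkedSupp α M u c)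
    (hpc : lval u p = c) (hqc : lval u q = c) : IsCoprime (q - p).1 (q - p).2 := by
  obtain ⟨-, -, -, u', c', -, -, hpq'⟩ :=
    exists_apex_of_marked_edge htri htall hp hq hpq hmarked hpc hqc
  rcases hpq' with ⟨hp', hq'⟩ | ⟨hq', hp'⟩
  · exact isCoprime_of_lval_eq_one (u := u') (by rw [lval_sub]; omega)
  · exact isCoprime_of_lval_eq_one (u := -u') (by rw [lval_neg_left, lval_sub]; omega)

lemma false_of_marked_edge
    (htri : ∀ p ∈ α, ∀ q ∈ α, ∀ r ∈ α, NotCollinear p q r → IsMarkedBTriangle α M p q r)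
    (htall : ∀ u c, IsMarkedSupp α M u c → ∃ z ∈ α, c + 1 < lval u z)
    (hp : p ∈ α) (hq : q ∈ α) (hpq : p ≠ q) (hmarked : IsMarkedSupp α M u c)
    (hpc : lval u p = c) (hqc : lval u q = c) : False := by
  obtain ⟨z, hz, hzc, u', c', hmarked', hz', hpq'⟩ :=
    exists_apex_of_marked_edge htri htall hp hq hpq hmarked hpc hqc
  have hcontra : ∀ x ∈ α, ∀ y : ℤ × ℤ, lval u x = c → lval u y = c → lval u' x = c' →
      lval u' y = c' + 1 → False := by
    intro x hx y hxc hyc hx' hy'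
    have hxz : x ≠ z := by rintro rfl; omega
    have hprim := isCoprime_sub_of_marked_edge htri htall hx hz hxz hmarked' hx' hz'
    have := lval_eq_one_or_neg_one_of_basis hmarked.1.1 hmarked'.1.1 hprim
      (w := y - x) (by rw [lval_sub]; omega) (by rw [lval_sub]; omega)
      (by rw [lval_sub]; omega)
    rw [lval_sub] at this
    omega
  rcases hpq' with ⟨hp', hq'⟩ | ⟨hq', hp'⟩
  · exact hcontra p hp q hpc hqc hp' hq'
  · exact hcontra q hq p hqc hpc hq' hp'

end TallSides

theorem stmt11_general (α : Finset (ℤ × ℤ)) (M : Finset (Finset (ℤ × ℤ)))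
    (h : IsMarkedBPolygon α M) :
    ∃ s ∈ M, ∃ u c, IsSupp α u c ∧ s = α.filter (fun x => lval u x = c) ∧
      ∀ p ∈ α, lval u p ≤ c + 1 := by
  by_contra! hlow
  obtain ⟨p, hp, q, hq, hpq, u, c, hmarked, hpc, hqc⟩ := h.exists_marked_edge
  exact false_of_marked_edge h.2.2 (fun u c hm => hlow _ hm.2 u c hm.1 rfl)
    hp hq hpq hmarked hpc hqc

/-- in a marked B-polygon that is not a B₁-marked polygon, there is a marked
side `L` such that every point of the polygon is at lattice distance at most 1 from the
line containing `L`. -/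
theorem stmt11 (α : Finset (ℤ × ℤ)) (M : Finset (Finset (ℤ × ℤ)))
    (h : IsMarkedBPolygon α M) (hnotB1 : ¬ B1Shape α M) :
    ∃ s ∈ M, ∃ u c, IsSupp α u c ∧ s = α.filter (fun x => lval u x = c) ∧
      ∀ p ∈ α, lval u p ≤ c + 1 :=
  stmt11_general α M h
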